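/- arXiv:2209.11823 — 4 statements merged into one kernel-verified Lean document; each statement's English description precedes it below -/
import Mathlib

section
/- Let μ₁ be a symmetric probability measure on ℝ, t > 0, and ε > 0. Then the equation w = ε + t·w·∫ 1/(u² + w²) dμ₁(u) has a unique solution w in (0, ∞). -/
open MeasureTheory Filter Topology Set

/-! For `w > 0` the equation is equivalent to `φ w = 1`, where
`φ w = ε / w + t * ∫ u, 1 / (u ^ 2 + w ^ 2) ∂μ₁` is continuous and strictly decreasing on
`(0, ∞)`. Since `φ ε ≥ 1` and, bounding the integral by `1 / w ^ 2`,
`φ (ε + t / ε) ≤ (ε + t / ε) / (ε + t / ε) = 1`, the intermediate value theorem gives a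
solution, and strict monotonicity makes it unique. -/

lemma one_div_sq_add_sq_le_one_div_sq (u : ℝ) {v w : ℝ} (hv : v ≠ 0) (hvw : |v| ≤ |w|) :
    1 / (u ^ 2 + w ^ 2) ≤ 1 / v ^ 2 := by
  have : v ^ 2 ≤ w ^ 2 := sq_le_sq.mpr hvw
  exact one_div_le_one_div_of_le (by positivity) (by nlinarith [sq_nonneg u])

section FiniteMeasure

variable {μ : Measure ℝ} [IsFiniteMeasure μ]

lemma integrable_one_div_sq_add_sq {w : ℝ} (hw : w ≠ 0) :
    Integrable (fun u => 1 / (u ^ 2 + w ^ 2)) μ := by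
  refine (integrable_const (1 / w ^ 2)).mono' (by fun_prop : Measurable _).aestronglyMeasurable
    (ae_of_all _ fun u => ?_)
  rw [Real.norm_of_nonneg (by positivity)]
  exact one_div_sq_add_sq_le_one_div_sq u hw le_rfl

lemma antitoneOn_integral_one_div_sq_add_sq :
    AntitoneOn (fun w => ∫ u, 1 / (u ^ 2 + w ^ 2) ∂μ) (Ioi 0) :=
  fun a (ha : 0 < a) b (hb : 0 < b) hab =>
    integral_mono (integrable_one_div_sq_add_sq hb.ne') (integrable_one_div_sq_add_sq ha.ne')
      fun u => one_div_le_one_div_of_le (by positivity) (by gcongr)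

lemma continuousAt_integral_one_div_sq_add_sq {w₀ : ℝ} (hw₀ : w₀ ≠ 0) :
    ContinuousAt (fun w => ∫ u, 1 / (u ^ 2 + w ^ 2) ∂μ) w₀ := by
  have hhalf : w₀ / 2 ≠ 0 := by positivity
  have hnear : ∀ᶠ w in 𝓝 w₀, |w₀ / 2| ≤ |w| :=
    (continuous_abs.tendsto w₀).eventually
      (eventually_ge_nhds (by rw [abs_div, abs_two]; linarith [abs_pos.mpr hw₀]))
  refine continuousAt_of_dominated (bound := fun _ => 1 / (w₀ / 2) ^ 2)
    (Eventually.of_forall fun w => (by fun_prop : Measurable _).aestronglyMeasurable) ?_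
    (integrable_const _)
    (ae_of_all _ fun u => continuousAt_const.div (by fun_prop) (by positivity))
  filter_upwards [hnear] with w hw
  refine ae_of_all _ fun u => ?_
  rw [Real.norm_of_nonneg (by positivity)]
  exact one_div_sq_add_sq_le_one_div_sq u hhalf hw

end FiniteMeasure

lemma integral_one_div_sq_add_sq_le {μ : Measure ℝ} [IsProbabilityMeasure μ] {w : ℝ}
    (hw : w ≠ 0) : ∫ u, 1 / (u ^ 2 + w ^ 2) ∂μ ≤ 1 / w ^ 2 := by
  simpa using integral_mono (integrable_one_div_sq_add_sq (μ := μ) hw)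
    (integrable_const (1 / w ^ 2)) fun u => one_div_sq_add_sq_le_one_div_sq u hw le_rfl

lemma eq_add_mul_iff_div_add_mul_eq_one {w ε t c : ℝ} (hw : w ≠ 0) :
    w = ε + t * w * c ↔ ε / w + t * c = 1 := by
  constructor <;> intro h
  · field_simp; linarith
  · field_simp at h; linarith

lemma div_add_mul_one_div_sq_le_one {ε t W : ℝ} (hε : 0 < ε) (ht : 0 ≤ t)
    (hW : ε + t / ε ≤ W) : ε / W + t * (1 / W ^ 2) ≤ 1 := by
  have hεW : ε ≤ W := le_of_add_le_of_nonneg_left hW (by positivity)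
  have hW₀ : 0 < W := hε.trans_le hεW
  calc ε / W + t * (1 / W ^ 2) = (ε + t / W) / W := by field_simp
    _ ≤ (ε + t / ε) / W := by gcongr
    _ ≤ 1 := (div_le_one hW₀).mpr hW

theorem fixed_point_equation_unique_solution_general
    (μ₁ : Measure ℝ) [IsProbabilityMeasure μ₁]
    (t ε : ℝ) (ht : 0 < t) (hε : 0 < ε) :
    ∃! w : ℝ, 0 < w ∧ w = ε + t * w * ∫ u, 1 / (u ^ 2 + w ^ 2) ∂μ₁ := by
  set φ := fun w => ε / w + t * ∫ u, 1 / (u ^ 2 + w ^ 2) ∂μ₁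
  have hφ_anti : StrictAntiOn φ (Ioi 0) :=
    StrictAntiOn.add_antitone (fun a ha b _ hab => div_lt_div_of_pos_left hε ha hab)
      fun a ha b hb hab => mul_le_mul_of_nonneg_left
        (antitoneOn_integral_one_div_sq_add_sq ha hb hab) ht.le
  set W := ε + t / ε
  have hεW : ε ≤ W := le_add_of_nonneg_right (by positivity)
  have hφ_cont : ContinuousOn φ (Icc ε W) := fun w hw =>
    have hw₀ : w ≠ 0 := (hε.trans_le hw.1).ne'
    ((continuousAt_const.div continuousAt_id hw₀).add (continuousAt_const.mul
      (continuousAt_integral_one_div_sq_add_sq hw₀))).continuousWithinAt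
  have hφ_ε : 1 ≤ φ ε := by
    have : 0 ≤ ∫ u, 1 / (u ^ 2 + ε ^ 2) ∂μ₁ := integral_nonneg fun u => by positivity
    simpa [φ, div_self hε.ne'] using mul_nonneg ht.le this
  have hφ_W : φ W ≤ 1 :=
    (add_le_add_right (mul_le_mul_of_nonneg_left
      (integral_one_div_sq_add_sq_le (hε.trans_le hεW).ne') ht.le) _).trans
      (div_add_mul_one_div_sq_le_one hε ht.le le_rfl)
  obtain ⟨w, hw, hφw⟩ := intermediate_value_Icc' hεW hφ_cont ⟨hφ_W, hφ_ε⟩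
  have hw₀ : 0 < w := hε.trans_le hw.1
  refine ⟨w, ⟨hw₀, (eq_add_mul_iff_div_add_mul_eq_one hw₀.ne').mpr hφw⟩, ?_⟩
  rintro y ⟨hy₀, hy⟩
  exact hφ_anti.injOn hy₀ hw₀
    (((eq_add_mul_iff_div_add_mul_eq_one hy₀.ne').mp hy).trans hφw.symm)

/-- Let `μ₁` be a symmetric probability measure on `ℝ`, `t > 0` and `ε > 0`.  Then the
equation `w = ε + t·w·∫ 1/(u² + w²) dμ₁(u)` has a unique solution `w` in `(0, ∞)`. -/
theorem fixed_point_equation_unique_solution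
    (μ₁ : Measure ℝ) [IsProbabilityMeasure μ₁]
    (hsym : Measure.map (fun u => -u) μ₁ = μ₁)
    (t ε : ℝ) (ht : 0 < t) (hε : 0 < ε) :
    ∃! w : ℝ, 0 < w ∧ w = ε + t * w * ∫ u, 1 / (u ^ 2 + w ^ 2) ∂μ₁ :=
  fixed_point_equation_unique_solution_general μ₁ t ε ht hε
end

section
/- Let μ₁ be a symmetric probability measure on ℝ, t > 0, and for each ε > 0 let w(ε) be the unique solution in (ε, ∞) of w = ε + t·w·∫ 1/(u² + w²) dμ₁(u). Then the function ε ↦ w(ε) is strictly increasing on (0, ∞). -/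
open MeasureTheory Filter Topology

lemma integ_aux (μ : Measure ℝ) [IsProbabilityMeasure μ] (c : ℝ) (hc : 0 < c) :
    Integrable (fun u : ℝ => 1 / (u ^ 2 + c ^ 2)) μ := by
  have hcont : Continuous fun u : ℝ => 1 / (u ^ 2 + c ^ 2) := by
    apply Continuous.div continuous_const (by continuity)
    intro x; positivity
  refine (integrable_const (1 / c ^ 2)).mono' hcont.aestronglyMeasurable ?_
  filter_upwards with u
  rw [Real.norm_eq_abs, abs_of_pos (by positivity)]
  apply one_div_le_one_div_of_le (by positivity)
  nlinarith [sq_nonneg u]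

/-- Let `μ₁` be a symmetric probability measure on `ℝ`, `t > 0`, and for each `ε > 0` let
`w ε` be the unique solution in `(ε, ∞)` of `w = ε + t·w·∫ 1/(u² + w²) dμ₁(u)`.
Then `ε ↦ w ε` is strictly increasing on `(0, ∞)`. -/
theorem fixed_point_strictly_increasing
    (μ₁ : Measure ℝ) [IsProbabilityMeasure μ₁]
    (hsym : Measure.map (fun u => -u) μ₁ = μ₁)
    (t : ℝ) (ht : 0 < t) (w : ℝ → ℝ)
    (hw : ∀ ε : ℝ, 0 < ε →
      ε < w ε ∧ w ε = ε + t * w ε * ∫ u, 1 / (u ^ 2 + (w ε) ^ 2) ∂μ₁) :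
    ∀ ε₁ ε₂ : ℝ, 0 < ε₁ → ε₁ < ε₂ → w ε₁ < w ε₂ := by
  intro ε₁ ε₂ hε₁ h12
  have hε₂ : 0 < ε₂ := hε₁.trans h12
  obtain ⟨hlt₁, heq₁⟩ := hw ε₁ hε₁
  obtain ⟨hlt₂, heq₂⟩ := hw ε₂ hε₂
  set w₁ := w ε₁ with hw₁
  set w₂ := w ε₂ with hw₂
  have hw₁pos : 0 < w₁ := hε₁.trans hlt₁
  have hw₂pos : 0 < w₂ := hε₂.trans hlt₂
  by_contra hcon
  push_neg at hcon
  -- hcon : w₂ ≤ w₁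
  have hI : (∫ u, 1 / (u ^ 2 + w₁ ^ 2) ∂μ₁) ≤ ∫ u, 1 / (u ^ 2 + w₂ ^ 2) ∂μ₁ := by
    apply integral_mono (integ_aux μ₁ w₁ hw₁pos) (integ_aux μ₁ w₂ hw₂pos)
    intro u
    apply one_div_le_one_div_of_le (by positivity)
    nlinarith [pow_le_pow_left₀ hw₂pos.le hcon 2]
  set I₁ := ∫ u, 1 / (u ^ 2 + w₁ ^ 2) ∂μ₁
  set I₂ := ∫ u, 1 / (u ^ 2 + w₂ ^ 2) ∂μ₁
  -- from the equations: t * I₁ = (w₁ - ε₁)/w₁, t * I₂ = (w₂ - ε₂)/w₂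
  have k₁ : t * I₁ * w₁ = w₁ - ε₁ := by linarith [heq₁]
  have k₂ : t * I₂ * w₂ = w₂ - ε₂ := by linarith [heq₂]
  have htI : t * I₁ ≤ t * I₂ := by nlinarith
  -- so (w₁ - ε₁)/w₁ ≤ (w₂ - ε₂)/w₂, i.e. ε₂ * w₁ ≤ ε₁ * w₂
  have : ε₂ * w₁ ≤ ε₁ * w₂ := by
    nlinarith [mul_le_mul_of_nonneg_right htI (by positivity : (0:ℝ) ≤ w₁ * w₂)]
  nlinarith
end

section
/- Fix α > β > 0, a probability measure μ on [0,∞), and ε > 0. Then the equation F(σ, ε) = 1/(α−β), where F(σ, ε) = (1/σ)·∫ [u² + ε²(α−β)² e^σ/(α − β e^σ)²]⁻¹ dμ(u), has a unique solution σ ∈ (0, log(α/β)). -/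
/-!
Write `c(σ) = ε²(α−β)² e^σ / (α − β e^σ)²` and `I(c) = ∫ (u² + c)⁻¹ dμ(u)`, so that
`F(σ) = I(c(σ)) / σ`. On `(0, log(α/β))` the coefficient `c` is positive, continuous and
increasing, and blows up at `log(α/β)`, where `α − β e^σ` vanishes. For `c > 0` the integral `I`
is positive, continuous and antitone, and `I(c) ≤ 1/c`. Hence `F` is continuous and strictly
decreasing, tends to `+∞` at `0⁺` and to `0` at `log(α/β)⁻`, and the intermediate value theorem
gives exactly one solution of `F(σ) = 1/(α−β)`.
-/

open MeasureTheory Filter Topology Set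

theorem existsUnique_eq_of_strictAntiOn_Ioo {α δ : Type*} [ConditionallyCompleteLinearOrder α]
    [TopologicalSpace α] [OrderTopology α] [DenselyOrdered α] [LinearOrder δ]
    [TopologicalSpace δ] [OrderClosedTopology δ] [NoMaxOrder δ]
    {f : α → δ} {a b : α} {l y : δ} (hab : a < b)
    (hcont : ContinuousOn f (Ioo a b)) (hanti : StrictAntiOn f (Ioo a b))
    (ha : Tendsto f (𝓝[>] a) atTop) (hb : Tendsto f (𝓝[<] b) (𝓝 l)) (hly : l < y) :
    ∃! x, x ∈ Ioo a b ∧ f x = y := by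
  have : (𝓝[>] a).NeBot := nhdsGT_neBot_of_exists_gt ⟨b, hab⟩
  have : (𝓝[<] b).NeBot := nhdsLT_neBot_of_exists_lt ⟨a, hab⟩
  obtain ⟨x₁, hfx₁, hx₁⟩ :=
    ((ha.eventually (eventually_gt_atTop y)).and (Ioo_mem_nhdsGT hab)).exists
  obtain ⟨x₂, hfx₂, hx₂⟩ :=
    ((hb.eventually (eventually_lt_nhds hly)).and (Ioo_mem_nhdsLT hab)).exists
  have hx₁₂ : x₁ < x₂ := (hanti.lt_iff_gt hx₂ hx₁).mp (hfx₂.trans hfx₁)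
  have hsub : Icc x₁ x₂ ⊆ Ioo a b := Icc_subset_Ioo hx₁.1 hx₂.2
  obtain ⟨x, hx, hfx⟩ :=
    intermediate_value_Icc' hx₁₂.le (hcont.mono hsub) ⟨hfx₂.le, hfx₁.le⟩
  exact ⟨x, ⟨hsub hx, hfx⟩, fun x' hx' => hanti.injOn hx'.1 (hsub hx) (hx'.2.trans hfx.symm)⟩

noncomputable def integralInvSqAdd (μ : Measure ℝ) (c : ℝ) : ℝ := ∫ u, (u ^ 2 + c)⁻¹ ∂μ

section integralInvSqAdd

variable {μ : Measure ℝ} {c : ℝ}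

lemma inv_sq_add_le_inv (hc : 0 < c) (u : ℝ) : (u ^ 2 + c)⁻¹ ≤ c⁻¹ :=
  inv_anti₀ hc (le_add_of_nonneg_left (sq_nonneg u))

lemma integrable_inv_sq_add [IsFiniteMeasure μ] (hc : 0 < c) :
    Integrable (fun u : ℝ => (u ^ 2 + c)⁻¹) μ := by
  refine (integrable_const c⁻¹).mono' ?_ (ae_of_all _ fun u => ?_)
  · exact (Continuous.inv₀ (by fun_prop) fun u => by positivity).aestronglyMeasurable
  · rw [Real.norm_of_nonneg (by positivity)]
    exact inv_sq_add_le_inv hc u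

lemma integralInvSqAdd_pos [IsFiniteMeasure μ] [NeZero μ] (hc : 0 < c) :
    0 < integralInvSqAdd μ c := by
  rw [integralInvSqAdd, integral_pos_iff_support_of_nonneg (fun u => by positivity)
    (integrable_inv_sq_add hc)]
  have : Function.support (fun u : ℝ => (u ^ 2 + c)⁻¹) = univ :=
    Function.support_eq_univ fun u => by positivity
  simpa [this] using NeZero.ne μ

lemma antitoneOn_integralInvSqAdd [IsFiniteMeasure μ] : AntitoneOn (integralInvSqAdd μ) (Ioi 0) :=
  fun c₁ (hc₁ : 0 < c₁) c₂ (hc₂ : 0 < c₂) h =>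
    integral_mono (integrable_inv_sq_add hc₂) (integrable_inv_sq_add hc₁)
      fun u => inv_anti₀ (by positivity) (by gcongr)

lemma tendsto_integralInvSqAdd_atTop [IsFiniteMeasure μ] :
    Tendsto (integralInvSqAdd μ) atTop (𝓝 0) := by
  have hbound : Tendsto (fun c : ℝ => μ.real univ * c⁻¹) atTop (𝓝 0) := by
    simpa using tendsto_inv_atTop_zero.const_mul (μ.real univ)
  refine tendsto_of_tendsto_of_tendsto_of_le_of_le' tendsto_const_nhds hbound ?_ ?_
  · filter_upwards [eventually_gt_atTop 0] with c hc
    exact integral_nonneg fun u => by positivity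
  · filter_upwards [eventually_gt_atTop 0] with c hc
    simpa [integralInvSqAdd] using
      integral_mono (integrable_inv_sq_add hc) (integrable_const _) (inv_sq_add_le_inv hc)

lemma continuousOn_integralInvSqAdd [IsFiniteMeasure μ] :
    ContinuousOn (integralInvSqAdd μ) (Ioi 0) := by
  intro c₀ (hc₀ : 0 < c₀)
  have hnear : ∀ᶠ c in 𝓝 c₀, c₀ / 2 < c := eventually_gt_nhds (by linarith)
  refine (continuousAt_of_dominated (bound := fun _ => (c₀ / 2)⁻¹) ?_ ?_
    (integrable_const _) (ae_of_all _ fun u => ?_)).continuousWithinAt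
  · filter_upwards [hnear] with c hc
    exact (integrable_inv_sq_add (by linarith)).aestronglyMeasurable
  · filter_upwards [hnear] with c hc
    have hc' : 0 < c := by linarith
    refine ae_of_all _ fun u => ?_
    rw [Real.norm_of_nonneg (by positivity)]
    exact (inv_sq_add_le_inv hc' u).trans (inv_anti₀ (by linarith) hc.le)
  · exact (continuousAt_const.add continuousAt_id).inv₀ (by positivity : u ^ 2 + c₀ ≠ 0)

end integralInvSqAdd

section expCoefficient

open Real

variable {K α β σ : ℝ}

lemma sub_mul_exp_pos (hα : 0 < α) (hβ : 0 < β) (hσ : σ < log (α / β)) :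
    0 < α - β * exp σ := by
  have : exp σ < α / β := (lt_log_iff_exp_lt (div_pos hα hβ)).mp hσ
  rw [lt_div_iff₀' hβ] at this
  linarith

lemma mapsTo_mul_exp_div_sq_sub (hK : 0 < K) (hα : 0 < α) (hβ : 0 < β) :
    MapsTo (fun σ => K * exp σ / (α - β * exp σ) ^ 2) (Iio (log (α / β))) (Ioi 0) :=
  fun _ hσ => div_pos (by positivity) (pow_pos (sub_mul_exp_pos hα hβ hσ) 2)

lemma monotoneOn_mul_exp_div_sq_sub (hK : 0 ≤ K) (hα : 0 < α) (hβ : 0 < β) :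
    MonotoneOn (fun σ => K * exp σ / (α - β * exp σ) ^ 2) (Iio (log (α / β))) := by
  intro σ₁ hσ₁ σ₂ hσ₂ h
  have hexp : exp σ₁ ≤ exp σ₂ := exp_le_exp.mpr h
  have hd₂ := sub_mul_exp_pos hα hβ hσ₂
  exact div_le_div₀ (by positivity) (by gcongr) (by positivity)
    (pow_le_pow_left₀ hd₂.le (by nlinarith) 2)

lemma continuousOn_mul_exp_div_sq_sub (hα : 0 < α) (hβ : 0 < β) :
    ContinuousOn (fun σ => K * exp σ / (α - β * exp σ) ^ 2) (Iio (log (α / β))) :=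
  fun σ hσ => (ContinuousAt.div (f := fun σ => K * exp σ) (g := fun σ => (α - β * exp σ) ^ 2)
    (by fun_prop) (by fun_prop) (pow_pos (sub_mul_exp_pos hα hβ hσ) 2).ne').continuousWithinAt

lemma tendsto_mul_exp_div_sq_sub_nhdsLT (hK : 0 < K) (hα : 0 < α) (hβ : 0 < β) :
    Tendsto (fun σ => K * exp σ / (α - β * exp σ) ^ 2) (𝓝[<] log (α / β)) atTop := by
  have hexp : exp (log (α / β)) = α / β := exp_log (div_pos hα hβ)
  have hden : Tendsto (fun σ => (α - β * exp σ) ^ 2) (𝓝[<] log (α / β)) (𝓝[>] 0) := by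
    refine tendsto_nhdsWithin_of_tendsto_nhds_of_eventually_within _ ?_ ?_
    · have : ContinuousAt (fun σ => (α - β * exp σ) ^ 2) (log (α / β)) := by fun_prop
      simpa [hexp, mul_div_cancel₀ α hβ.ne'] using this.tendsto.mono_left nhdsWithin_le_nhds
    · filter_upwards [self_mem_nhdsWithin] with σ hσ
      exact pow_pos (sub_mul_exp_pos hα hβ hσ) 2
  have hnum : Tendsto (fun σ => K * exp σ) (𝓝[<] log (α / β)) (𝓝 (K * (α / β))) := by
    have : ContinuousAt (fun σ => K * exp σ) (log (α / β)) := by fun_prop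
    simpa only [hexp] using this.tendsto.mono_left nhdsWithin_le_nhds
  simpa only [div_eq_mul_inv, Pi.inv_apply] using
    hnum.pos_mul_atTop (by positivity) hden.inv_tendsto_nhdsGT_zero

end expCoefficient

section quotient

variable {μ : Measure ℝ} [IsFiniteMeasure μ] {c : ℝ → ℝ} {b : ℝ}

lemma strictAntiOn_inv_mul_integralInvSqAdd [NeZero μ] (hc : MapsTo c (Ioo 0 b) (Ioi 0))
    (hmono : MonotoneOn c (Ioo 0 b)) :
    StrictAntiOn (fun σ => σ⁻¹ * integralInvSqAdd μ (c σ)) (Ioo 0 b) := by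
  intro σ₁ hσ₁ σ₂ hσ₂ h
  have hI : integralInvSqAdd μ (c σ₂) ≤ integralInvSqAdd μ (c σ₁) :=
    antitoneOn_integralInvSqAdd (hc hσ₁) (hc hσ₂) (hmono hσ₁ hσ₂ h.le)
  have hσ₂ : 0 < σ₂ := hσ₂.1
  calc σ₂⁻¹ * integralInvSqAdd μ (c σ₂) ≤ σ₂⁻¹ * integralInvSqAdd μ (c σ₁) := by gcongr
    _ < σ₁⁻¹ * integralInvSqAdd μ (c σ₁) := by
      gcongr
      exacts [integralInvSqAdd_pos (hc hσ₁), hσ₁.1]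

lemma tendsto_inv_mul_integralInvSqAdd_nhdsGT_zero [NeZero μ] (hb : 0 < b)
    (hc : MapsTo c (Ioo 0 b) (Ioi 0)) (hmono : MonotoneOn c (Ioo 0 b)) :
    Tendsto (fun σ => σ⁻¹ * integralInvSqAdd μ (c σ)) (𝓝[>] 0) atTop := by
  have hmid : b / 2 ∈ Ioo 0 b := ⟨half_pos hb, half_lt_self hb⟩
  have hm : 0 < integralInvSqAdd μ (c (b / 2)) := integralInvSqAdd_pos (hc hmid)
  refine tendsto_atTop_mono' _ ?_ (tendsto_inv_nhdsGT_zero.atTop_mul_const hm)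
  filter_upwards [Ioo_mem_nhdsGT hmid.1] with σ hσ
  have hσb : σ ∈ Ioo 0 b := ⟨hσ.1, hσ.2.trans hmid.2⟩
  have hσ₀ : 0 < σ := hσ.1
  gcongr
  exact antitoneOn_integralInvSqAdd (hc hσb) (hc hmid) (hmono hσb hmid hσ.2.le)

lemma tendsto_inv_mul_integralInvSqAdd_nhdsLT (hb : b ≠ 0) (hc : Tendsto c (𝓝[<] b) atTop) :
    Tendsto (fun σ => σ⁻¹ * integralInvSqAdd μ (c σ)) (𝓝[<] b) (𝓝 0) := by
  simpa using ((tendsto_inv₀ hb).mono_left nhdsWithin_le_nhds).mul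
    (tendsto_integralInvSqAdd_atTop.comp hc)

end quotient

theorem F_equation_unique_solution_general
    (α β : ℝ) (hβ : 0 < β) (hαβ : β < α)
    (μ : Measure ℝ) [IsProbabilityMeasure μ]
    (ε : ℝ) (hε : 0 < ε) :
    ∃! σ : ℝ, σ ∈ Set.Ioo 0 (Real.log (α / β)) ∧
      (1 / σ) *
        ∫ u, (u ^ 2 + ε ^ 2 * (α - β) ^ 2 * Real.exp σ / (α - β * Real.exp σ) ^ 2)⁻¹ ∂μ
        = 1 / (α - β) := by
  have hα : 0 < α := hβ.trans hαβ
  have hab : 0 < α - β := sub_pos.mpr hαβ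
  have hL : 0 < Real.log (α / β) := Real.log_pos ((one_lt_div hβ).mpr hαβ)
  have hK : 0 < ε ^ 2 * (α - β) ^ 2 := by positivity
  have hc := (mapsTo_mul_exp_div_sq_sub hK hα hβ).mono_left (Ioo_subset_Iio_self (a := 0))
  have hmono := (monotoneOn_mul_exp_div_sq_sub hK.le hα hβ).mono (Ioo_subset_Iio_self (a := 0))
  have hcont : ContinuousOn (fun σ => σ⁻¹ * integralInvSqAdd μ
      (ε ^ 2 * (α - β) ^ 2 * Real.exp σ / (α - β * Real.exp σ) ^ 2)) (Ioo 0 (Real.log (α / β))) :=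
    (continuousOn_inv₀.mono fun _ hσ => hσ.1.ne').mul <| continuousOn_integralInvSqAdd.comp
      ((continuousOn_mul_exp_div_sq_sub hα hβ).mono (Ioo_subset_Iio_self (a := 0))) hc
  simpa only [one_div, integralInvSqAdd] using existsUnique_eq_of_strictAntiOn_Ioo hL hcont
    (strictAntiOn_inv_mul_integralInvSqAdd hc hmono)
    (tendsto_inv_mul_integralInvSqAdd_nhdsGT_zero hL hc hmono)
    (tendsto_inv_mul_integralInvSqAdd_nhdsLT hL.ne' (tendsto_mul_exp_div_sq_sub_nhdsLT hK hα hβ))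
    (one_div_pos.mpr hab)

/-- Fix `α > β > 0`, a probability measure `μ` on `[0,∞)`, and `ε > 0`.  Then the equation
`F(σ, ε) = 1/(α−β)`, where
`F(σ, ε) = (1/σ)·∫ [u² + ε²(α−β)² e^σ/(α − β e^σ)²]⁻¹ dμ(u)`, has a unique solution
`σ ∈ (0, log(α/β))`. -/
theorem F_equation_unique_solution
    (α β : ℝ) (hβ : 0 < β) (hαβ : β < α)
    (μ : Measure ℝ) [IsProbabilityMeasure μ] (hμ : μ (Set.Iio 0) = 0)
    (ε : ℝ) (hε : 0 < ε) :
    ∃! σ : ℝ, σ ∈ Set.Ioo 0 (Real.log (α / β)) ∧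
      (1 / σ) *
        ∫ u, (u ^ 2 + ε ^ 2 * (α - β) ^ 2 * Real.exp σ / (α - β * Real.exp σ) ^ 2)⁻¹ ∂μ
        = 1 / (α - β) :=
  F_equation_unique_solution_general α β hβ hαβ μ ε hε
end

section
/- Let A be a tracial von Neumann algebra with trace φ, x ∈ A, s > 0, t > 0, and suppose φ[(x*x + s²)⁻¹] ≤ 1/t. With h = x*x + s², k = xx* + s², one has |φ(h⁻²x)|²/φ(h⁻²) + s²·φ(h⁻¹k⁻¹) ≤ 1/t. -/
/-! Write `H = h⁻¹`, `K = k⁻¹`. Since `k x = x h`, also `K x = x H`, and the trace property gives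
`φ K = φ H`, `φ (K²) = φ (H²)` and `φ (x H² x⋆) = φ H - s² φ (H²)`. Cauchy–Schwarz for the
semi-inner product `φ (a⋆ b)` then bounds `|φ (H² x)|²` by `φ (H²) (φ H - s² φ (H²))` and
`|φ (H K)|` by `φ (H²)`, so the left-hand side is at most `φ H ≤ 1 / t`. -/

section Trace

variable {𝕜 A : Type*} [Field 𝕜] [Ring A] [Algebra 𝕜 A]

theorem Ring.inverse_add_algebraMap_mul {a : A} {c : 𝕜} (ha : IsUnit (a + algebraMap 𝕜 A c)) :
    Ring.inverse (a + algebraMap 𝕜 A c) * a = 1 - c • Ring.inverse (a + algebraMap 𝕜 A c) := by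
  rw [eq_sub_iff_add_eq, Algebra.smul_def, Algebra.commutes, ← mul_add,
    Ring.inverse_mul_cancel _ ha]

theorem Ring.inverse_add_algebraMap_mul_comm {x y : A} {c : 𝕜}
    (hh : IsUnit (y * x + algebraMap 𝕜 A c)) (hk : IsUnit (x * y + algebraMap 𝕜 A c)) :
    Ring.inverse (x * y + algebraMap 𝕜 A c) * x = x * Ring.inverse (y * x + algebraMap 𝕜 A c) := by
  have hcomm : (x * y + algebraMap 𝕜 A c) * x = x * (y * x + algebraMap 𝕜 A c) := by
    rw [add_mul, mul_add, mul_assoc, Algebra.commutes]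
  calc Ring.inverse (x * y + algebraMap 𝕜 A c) * x
      = Ring.inverse (x * y + algebraMap 𝕜 A c) * (x * (y * x + algebraMap 𝕜 A c))
          * Ring.inverse (y * x + algebraMap 𝕜 A c) := by
        rw [← mul_assoc, mul_assoc _ _ (Ring.inverse _), Ring.mul_inverse_cancel _ hh, mul_one]
    _ = x * Ring.inverse (y * x + algebraMap 𝕜 A c) := by
        rw [← hcomm, ← mul_assoc, Ring.inverse_mul_cancel _ hk, one_mul]

variable {φ : A →ₗ[𝕜] 𝕜} {x y : A} {c : 𝕜}

theorem trace_mul_inverse_sq_mul (hφ : ∀ a b, φ (a * b) = φ (b * a))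
    (hh : IsUnit (y * x + algebraMap 𝕜 A c)) :
    φ (x * Ring.inverse (y * x + algebraMap 𝕜 A c) * Ring.inverse (y * x + algebraMap 𝕜 A c) * y)
      = φ (Ring.inverse (y * x + algebraMap 𝕜 A c))
        - c * φ (Ring.inverse (y * x + algebraMap 𝕜 A c) *
          Ring.inverse (y * x + algebraMap 𝕜 A c)) := by
  set H := Ring.inverse (y * x + algebraMap 𝕜 A c)
  calc φ (x * H * H * y) = φ (H * (H * (y * x))) := by
        rw [← mul_assoc H H, hφ (H * H), hφ (x * H * H)]; simp only [mul_assoc]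
    _ = φ H - c * φ (H * H) := by
        rw [Ring.inverse_add_algebraMap_mul hh, mul_sub, mul_one, mul_smul_comm, map_sub, map_smul,
          smul_eq_mul]

theorem trace_inverse_add_algebraMap_mul_comm (hφ : ∀ a b, φ (a * b) = φ (b * a)) (hc : c ≠ 0)
    (hh : IsUnit (y * x + algebraMap 𝕜 A c)) (hk : IsUnit (x * y + algebraMap 𝕜 A c)) :
    φ (Ring.inverse (x * y + algebraMap 𝕜 A c)) = φ (Ring.inverse (y * x + algebraMap 𝕜 A c)) := by
  set H := Ring.inverse (y * x + algebraMap 𝕜 A c)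
  set K := Ring.inverse (x * y + algebraMap 𝕜 A c)
  have key : φ (K * (x * y)) = φ (H * (y * x)) := by
    rw [← mul_assoc, Ring.inverse_add_algebraMap_mul_comm hh hk, mul_assoc, hφ, mul_assoc]
  rw [Ring.inverse_add_algebraMap_mul hk, Ring.inverse_add_algebraMap_mul hh, map_sub, map_sub,
    sub_right_inj, map_smul, map_smul, smul_eq_mul, smul_eq_mul] at key
  exact mul_left_cancel₀ hc key

theorem trace_inverse_sq_add_algebraMap_mul_comm (hφ : ∀ a b, φ (a * b) = φ (b * a)) (hc : c ≠ 0)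
    (hh : IsUnit (y * x + algebraMap 𝕜 A c)) (hk : IsUnit (x * y + algebraMap 𝕜 A c)) :
    φ (Ring.inverse (x * y + algebraMap 𝕜 A c) * Ring.inverse (x * y + algebraMap 𝕜 A c))
      = φ (Ring.inverse (y * x + algebraMap 𝕜 A c) * Ring.inverse (y * x + algebraMap 𝕜 A c)) := by
  have key := trace_mul_inverse_sq_mul hφ hh
  set H := Ring.inverse (y * x + algebraMap 𝕜 A c)
  set K := Ring.inverse (x * y + algebraMap 𝕜 A c)
  have hKx : K * x = x * H := Ring.inverse_add_algebraMap_mul_comm hh hk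
  have : K * (K * (x * y)) = x * H * H * y := by
    rw [← mul_assoc K x, hKx, ← mul_assoc, ← mul_assoc, hKx]
  rw [← this, Ring.inverse_add_algebraMap_mul hk, mul_sub, mul_one, mul_smul_comm, map_sub,
    map_smul, smul_eq_mul, trace_inverse_add_algebraMap_mul_comm hφ hc hh hk, sub_right_inj] at key
  exact mul_left_cancel₀ hc key

end Trace

section StarAlgebra

variable {A : Type*} [Ring A] [StarRing A] [Algebra ℂ A] [StarModule ℂ A] {φ : A →ₗ[ℂ] ℂ}

abbrev LinearMap.starMulCore (φ : A →ₗ[ℂ] ℂ) (hφpos : ∀ a : A, 0 ≤ (φ (star a * a)).re)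
    (hφstar : ∀ a : A, φ (star a) = starRingEnd ℂ (φ a)) : PreInnerProductSpace.Core ℂ A where
  inner a b := φ (star a * b)
  conj_inner_symm a b := by rw [← hφstar, star_mul, star_star]
  re_inner_nonneg := hφpos
  add_left a b c := by simp only [star_add, add_mul, map_add]
  smul_left a b r := by
    simp only [star_smul, smul_mul_assoc, map_smul, smul_eq_mul, Complex.star_def]

theorem norm_apply_star_mul_sq_le (hφpos : ∀ a : A, 0 ≤ (φ (star a * a)).re)
    (hφstar : ∀ a : A, φ (star a) = starRingEnd ℂ (φ a)) (a b : A) :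
    ‖φ (star a * b)‖ ^ 2 ≤ (φ (star a * a)).re * (φ (star b * b)).re := by
  let _ := φ.starMulCore hφpos hφstar
  have := InnerProductSpace.Core.inner_mul_inner_self_le (𝕜 := ℂ) a b
  rw [InnerProductSpace.Core.norm_inner_symm b a, ← sq] at this
  exact this

theorem isSelfAdjoint_ringInverse_star_mul_self_add_algebraMap (x : A) (s : ℝ) :
    IsSelfAdjoint (Ring.inverse (star x * x + algebraMap ℂ A ((s : ℂ) ^ 2))) :=
  ((IsSelfAdjoint.star_mul_self x).add
    (.algebraMap A (IsSelfAdjoint.pow (Complex.conj_ofReal s) 2))).ringInverse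

theorem norm_trace_inverse_sq_mul_sq_div_add_le (hφtr : ∀ a b : A, φ (a * b) = φ (b * a))
    (hφpos : ∀ a : A, 0 ≤ (φ (star a * a)).re)
    (hφstar : ∀ a : A, φ (star a) = starRingEnd ℂ (φ a)) {x h k : A} {s : ℝ} (hs : s ≠ 0)
    (hh : h = star x * x + algebraMap ℂ A ((s : ℂ) ^ 2))
    (hk : k = x * star x + algebraMap ℂ A ((s : ℂ) ^ 2)) (hhU : IsUnit h) (hkU : IsUnit k) :
    ‖φ (Ring.inverse h * Ring.inverse h * x)‖ ^ 2 / (φ (Ring.inverse h * Ring.inverse h)).re +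
      s ^ 2 * (φ (Ring.inverse h * Ring.inverse k)).re ≤ (φ (Ring.inverse h)).re := by
  have hH := isSelfAdjoint_ringInverse_star_mul_self_add_algebraMap x s
  have hK := isSelfAdjoint_ringInverse_star_mul_self_add_algebraMap (star x) s
  rw [star_star] at hK
  subst hh hk
  have hc : (s : ℂ) ^ 2 ≠ 0 := pow_ne_zero 2 (Complex.ofReal_ne_zero.mpr hs)
  have hxHHx := trace_mul_inverse_sq_mul hφtr hhU
  have hKK := trace_inverse_sq_add_algebraMap_mul_comm hφtr hc hhU hkU
  set H := Ring.inverse (star x * x + algebraMap ℂ A ((s : ℂ) ^ 2))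
  set K := Ring.inverse (x * star x + algebraMap ℂ A ((s : ℂ) ^ 2))
  set P := (φ (H * H)).re
  set Q := (φ H).re
  have hre : (φ (x * H * H * star x)).re = Q - s ^ 2 * P := by
    rw [hxHHx, ← Complex.ofReal_pow, Complex.sub_re, Complex.re_ofReal_mul]
  have hP : 0 ≤ P := by simpa only [hH.star_eq] using hφpos H
  have hQP : 0 ≤ Q - s ^ 2 * P := by
    simpa only [← hre, star_mul, star_star, hH.star_eq, ← mul_assoc] using hφpos (H * star x)
  have hHHx : ‖φ (H * H * x)‖ ^ 2 ≤ (Q - s ^ 2 * P) * P := by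
    have htr : φ (x * H * H) = φ (H * H * x) := by rw [mul_assoc, hφtr]
    have := norm_apply_star_mul_sq_le hφpos hφstar (H * star x) H
    rwa [star_mul, star_star, hH.star_eq, ← mul_assoc, hre, htr] at this
  have hHK : ‖φ (H * K)‖ ≤ P := by
    have := norm_apply_star_mul_sq_le hφpos hφstar H K
    rw [hH.star_eq, hK.star_eq, hKK, ← sq] at this
    exact (pow_le_pow_iff_left₀ (norm_nonneg _) hP two_ne_zero).mp this
  calc ‖φ (H * H * x)‖ ^ 2 / P + s ^ 2 * (φ (H * K)).re
      ≤ (Q - s ^ 2 * P) + s ^ 2 * P :=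
        add_le_add (div_le_of_le_mul₀ hP hQP hHHx)
          (mul_le_mul_of_nonneg_left ((Complex.re_le_norm _).trans hHK) (sq_nonneg s))
    _ = Q := by ring

end StarAlgebra

theorem isUnit_star_mul_self_add_algebraMap {A : Type*} [CStarAlgebra A] [PartialOrder A]
    [StarOrderedRing A] (x : A) {r : ℝ} (hr : 0 < r) :
    IsUnit (star x * x + algebraMap ℝ A r) :=
  ((isStrictlyPositive_algebraMap hr).nonneg_add (star_mul_self_nonneg x)).isUnit

theorem brown_density_upper_bound_general
    {A : Type*} [NormedRing A] [StarRing A] [CStarRing A] [CompleteSpace A]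
    [NormedAlgebra ℂ A] [StarModule ℂ A]
    (φ : A →ₗ[ℂ] ℂ) (hφtr : ∀ a b : A, φ (a * b) = φ (b * a))
    (hφpos : ∀ a : A, 0 ≤ (φ (star a * a)).re)
    (hφstar : ∀ a : A, φ (star a) = starRingEnd ℂ (φ a))
    (x : A) (s t : ℝ) (hs : 0 < s)
    (h k : A)
    (hh : h = star x * x + algebraMap ℂ A ((s : ℂ) ^ 2))
    (hk : k = x * star x + algebraMap ℂ A ((s : ℂ) ^ 2))
    (hbound : (φ (Ring.inverse h)).re ≤ 1 / t) :
    ‖φ (Ring.inverse h * Ring.inverse h * x)‖ ^ 2 /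
        (φ (Ring.inverse h * Ring.inverse h)).re +
      s ^ 2 * (φ (Ring.inverse h * Ring.inverse k)).re ≤ 1 / t := by
  let _ : CStarAlgebra A := {}
  let _ := CStarAlgebra.spectralOrder A
  have := CStarAlgebra.spectralOrderedRing A
  have hs2 : algebraMap ℂ A ((s : ℂ) ^ 2) = algebraMap ℝ A (s ^ 2) := by
    rw [IsScalarTower.algebraMap_apply ℝ ℂ A, Complex.coe_algebraMap, Complex.ofReal_pow]
  have hunit (y : A) : IsUnit (star y * y + algebraMap ℂ A ((s : ℂ) ^ 2)) :=
    hs2 ▸ isUnit_star_mul_self_add_algebraMap y (pow_pos hs 2)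
  have hkU := hunit (star x)
  rw [star_star] at hkU
  exact (norm_trace_inverse_sq_mul_sq_div_add_le hφtr hφpos hφstar hs.ne' hh hk
    (hh ▸ hunit x) (hk ▸ hkU)).trans hbound

/-- Let `(A, φ)` be a tracial von Neumann (here: unital C*-) algebra, `x ∈ A`, `s > 0`,
`t > 0`, with `φ[(x*x + s²)⁻¹] ≤ 1/t`.  With `h = x*x + s²` and `k = xx* + s²`,
`|φ(h⁻²x)|²/φ(h⁻²) + s²·φ(h⁻¹k⁻¹) ≤ 1/t`. -/
theorem brown_density_upper_bound
    {A : Type*} [NormedRing A] [StarRing A] [CStarRing A] [CompleteSpace A]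
    [NormedAlgebra ℂ A] [StarModule ℂ A]
    (φ : A →ₗ[ℂ] ℂ) (hφtr : ∀ a b : A, φ (a * b) = φ (b * a))
    (hφpos : ∀ a : A, 0 ≤ (φ (star a * a)).re)
    (hφstar : ∀ a : A, φ (star a) = starRingEnd ℂ (φ a))
    (hφone : φ 1 = 1)
    (x : A) (s t : ℝ) (hs : 0 < s) (ht : 0 < t)
    (h k : A)
    (hh : h = star x * x + algebraMap ℂ A ((s : ℂ) ^ 2))
    (hk : k = x * star x + algebraMap ℂ A ((s : ℂ) ^ 2))
    (hbound : (φ (Ring.inverse h)).re ≤ 1 / t) :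
    ‖φ (Ring.inverse h * Ring.inverse h * x)‖ ^ 2 /
        (φ (Ring.inverse h * Ring.inverse h)).re +
      s ^ 2 * (φ (Ring.inverse h * Ring.inverse k)).re ≤ 1 / t :=
  brown_density_upper_bound_general φ hφtr hφpos hφstar x s t hs h k hh hk hbound
end
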